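/- If C is a Hermitian self-dual linear code of length n over R = F_q[u]/(u^3) (q a square), then Tor_2(C) equals the Hermitian dual of the residue code Res(C) = Tor_0(C) in F_q^n. -/

import Mathlib

open Polynomial

/-- `R = F_q[u]/(u^3)`. -/
abbrev R3 (F : Type*) [Field F] : Type _ := AdjoinRoot ((X : Polynomial F) ^ 3)

/-- Hermitian dual (as a set) of a linear code over `R = F_q[u]/(u^3)`. -/
def HdualR {F : Type*} [Field F] {n : ℕ} (bar : R3 F →+* R3 F)
    (C : Submodule (R3 F) (Fin n → R3 F)) : Set (Fin n → R3 F) :=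
  { v | ∀ c ∈ C, ∑ i, c i * bar (v i) = 0 }

/-- Hermitian dual (as a set) of a code `D ⊆ F_q^n`, `⟨x,y⟩ = Σ x_i y_i^r`. -/
def HdualF {F : Type*} [Field F] (r : ℕ) {n : ℕ} (D : Set (Fin n → F)) :
    Set (Fin n → F) :=
  { y | ∀ x ∈ D, ∑ i, x i * y i ^ r = 0 }

/-! Writing `s = π s + u t`, the conjugation acts on residues as `x ↦ x ^ r`, and `u² s = 0`
exactly when `π s = 0`. Hence `⟨c, u² v⟩_H = 0` iff the residues satisfy
`∑ π (c i) * π (v i) ^ r = 0`; by self-duality this says `u² v ∈ C`, and any residue vector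
lifts to a constant vector. -/

open AdjoinRoot

namespace R3

variable {F : Type*} [Field F]

lemma root_pow_three : root (X ^ 3 : F[X]) ^ 3 = 0 := by
  rw [← mk_X, ← map_pow, mk_self]

lemma exists_eq_algebraMap_add_root_mul (s : R3 F) :
    ∃ a : F, ∃ t : R3 F, s = algebraMap F (R3 F) a + root (X ^ 3 : F[X]) * t := by
  obtain ⟨g, rfl⟩ := mk_surjective s
  refine ⟨g.coeff 0, mk _ g.divX, ?_⟩
  conv_lhs => rw [← X_mul_divX_add g]
  rw [map_add, map_mul, mk_X, mk_C, AdjoinRoot.algebraMap_eq]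
  ring

variable (π : R3 F →+* F)

lemma eq_algebraMap_add_root_mul (hπ0 : π (root (X ^ 3 : F[X])) = 0)
    (hπa : ∀ a : F, π (algebraMap F (R3 F) a) = a) (s : R3 F) :
    ∃ t : R3 F, s = algebraMap F (R3 F) (π s) + root (X ^ 3 : F[X]) * t := by
  obtain ⟨a, t, rfl⟩ := exists_eq_algebraMap_add_root_mul s
  exact ⟨t, by rw [map_add, map_mul, hπ0, hπa, zero_mul, add_zero]⟩

lemma root_sq_mul_algebraMap_eq_zero_iff (a : F) :
    root (X ^ 3 : F[X]) ^ 2 * algebraMap F (R3 F) a = 0 ↔ a = 0 := by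
  refine ⟨fun h => ?_, fun h => by rw [h, map_zero, mul_zero]⟩
  by_contra ha
  rw [AdjoinRoot.algebraMap_eq, ← mk_C, ← mk_X, ← map_pow, ← map_mul, mk_eq_zero] at h
  have hdeg := natDegree_le_of_dvd h (mul_ne_zero (pow_ne_zero _ X_ne_zero) (C_ne_zero.2 ha))
  rw [natDegree_X_pow, natDegree_mul (pow_ne_zero _ X_ne_zero) (C_ne_zero.2 ha),
    natDegree_X_pow, natDegree_C] at hdeg
  omega

lemma root_sq_mul_eq_zero_iff (hπ0 : π (root (X ^ 3 : F[X])) = 0)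
    (hπa : ∀ a : F, π (algebraMap F (R3 F) a) = a) (s : R3 F) :
    root (X ^ 3 : F[X]) ^ 2 * s = 0 ↔ π s = 0 := by
  obtain ⟨t, ht⟩ := eq_algebraMap_add_root_mul π hπ0 hπa s
  have : root (X ^ 3 : F[X]) ^ 2 * s =
      root (X ^ 3 : F[X]) ^ 2 * algebraMap F (R3 F) (π s) := by
    rw [ht, mul_add, map_add, map_mul, hπ0, hπa, zero_mul, add_zero, ← mul_assoc, ← pow_succ,
      root_pow_three, zero_mul, add_zero]
  rw [this, root_sq_mul_algebraMap_eq_zero_iff]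

lemma apply_bar_eq_pow (hπ0 : π (root (X ^ 3 : F[X])) = 0)
    (hπa : ∀ a : F, π (algebraMap F (R3 F) a) = a) {r : ℕ} (bar : R3 F →+* R3 F)
    (hbar1 : ∀ a : F, bar (algebraMap F (R3 F) a) = algebraMap F (R3 F) (a ^ r))
    (hbar2 : bar (root (X ^ 3 : F[X])) = root (X ^ 3 : F[X])) (s : R3 F) :
    π (bar s) = π s ^ r := by
  obtain ⟨t, ht⟩ := eq_algebraMap_add_root_mul π hπ0 hπa s
  conv_lhs => rw [ht]
  rw [map_add, map_mul, hbar1, hbar2, map_add, map_mul, hπa, hπ0, zero_mul, add_zero]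

/-- `⟨c, u² v⟩ = u² ⟨c, v⟩` because `bar u = u`, and `u²` kills exactly `ker π`. -/
lemma root_sq_smul_mem_hdualR_iff (hπ0 : π (root (X ^ 3 : F[X])) = 0)
    (hπa : ∀ a : F, π (algebraMap F (R3 F) a) = a) {r n : ℕ} (bar : R3 F →+* R3 F)
    (hbar1 : ∀ a : F, bar (algebraMap F (R3 F) a) = algebraMap F (R3 F) (a ^ r))
    (hbar2 : bar (root (X ^ 3 : F[X])) = root (X ^ 3 : F[X]))
    (C : Submodule (R3 F) (Fin n → R3 F)) (v : Fin n → R3 F) :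
    root (X ^ 3 : F[X]) ^ 2 • v ∈ HdualR bar C ↔
      ∀ c ∈ C, ∑ i, π (c i) * π (v i) ^ r = 0 := by
  refine forall₂_congr fun c _ => ?_
  have : ∑ i, c i * bar ((root (X ^ 3 : F[X]) ^ 2 • v) i) =
      root (X ^ 3 : F[X]) ^ 2 * ∑ i, c i * bar (v i) := by
    simp only [Finset.mul_sum, Pi.smul_apply, smul_eq_mul, map_mul, map_pow, hbar2]
    exact Finset.sum_congr rfl fun i _ => by ring
  rw [this, root_sq_mul_eq_zero_iff π hπ0 hπa, map_sum]
  simp only [map_mul, apply_bar_eq_pow π hπ0 hπa bar hbar1 hbar2]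

end R3

theorem stmt_5_general (r n : ℕ)
    (F : Type*) [Field F]
    (bar : R3 F →+* R3 F)
    (hbar1 : ∀ a : F, bar (algebraMap F (R3 F) a) = algebraMap F (R3 F) (a ^ r))
    (hbar2 : bar (AdjoinRoot.root ((X : Polynomial F) ^ 3)) =
      AdjoinRoot.root ((X : Polynomial F) ^ 3))
    (π : R3 F →+* F)
    (hπ0 : π (AdjoinRoot.root ((X : Polynomial F) ^ 3)) = 0)
    (hπa : ∀ a : F, π (algebraMap F (R3 F) a) = a)
    (C : Submodule (R3 F) (Fin n → R3 F))
    (hC : (C : Set (Fin n → R3 F)) = HdualR bar C)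
    (T0 T2 : Set (Fin n → F))
    (hT0 : T0 = { w | ∃ v : Fin n → R3 F, v ∈ C ∧ w = fun i => π (v i) })
    (hT2 : T2 = { w | ∃ v : Fin n → R3 F,
      (AdjoinRoot.root ((X : Polynomial F) ^ 3)) ^ 2 • v ∈ C ∧ w = fun i => π (v i) }) :
    T2 = HdualF r T0 := by
  have mem_C := R3.root_sq_smul_mem_hdualR_iff π hπ0 hπa bar hbar1 hbar2 C
  rw [← hC] at mem_C
  have mem_dual : ∀ w, w ∈ HdualF r T0 ↔ ∀ c ∈ C, ∑ i, π (c i) * w i ^ r = 0 := by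
    simp only [HdualF, hT0, Set.mem_ofPred_eq]
    exact fun w => ⟨fun h c hc => h _ ⟨c, hc, rfl⟩, fun h _ ⟨c, hc, hx⟩ => hx ▸ h c hc⟩
  ext w
  rw [mem_dual, hT2]
  constructor
  · rintro ⟨v, hv, rfl⟩
    exact (mem_C v).1 hv
  · intro hw
    refine ⟨fun i => algebraMap F (R3 F) (w i), (mem_C _).2 ?_, by simp only [hπa]⟩
    simpa only [hπa] using hw

/-- If `C` is a Hermitian self-dual linear code of length `n` over
`R = F_q[u]/(u^3)` (`q = r^2` a square), then `Tor_2(C)` equals the Hermitian dual of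
the residue code `Res(C) = Tor_0(C)` in `F_q^n`. -/
theorem stmt_5 (p j r n : ℕ) (hp : p.Prime) (hj : 1 ≤ j) (hr : r = p ^ j)
    (F : Type*) [Field F] [Fintype F] (hcard : Fintype.card F = r ^ 2)
    (bar : R3 F →+* R3 F)
    (hbar1 : ∀ a : F, bar (algebraMap F (R3 F) a) = algebraMap F (R3 F) (a ^ r))
    (hbar2 : bar (AdjoinRoot.root ((X : Polynomial F) ^ 3)) =
      AdjoinRoot.root ((X : Polynomial F) ^ 3))
    (π : R3 F →+* F)
    (hπ0 : π (AdjoinRoot.root ((X : Polynomial F) ^ 3)) = 0)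
    (hπa : ∀ a : F, π (algebraMap F (R3 F) a) = a)
    (C : Submodule (R3 F) (Fin n → R3 F))
    (hC : (C : Set (Fin n → R3 F)) = HdualR bar C)
    (T0 T2 : Set (Fin n → F))
    (hT0 : T0 = { w | ∃ v : Fin n → R3 F, v ∈ C ∧ w = fun i => π (v i) })
    (hT2 : T2 = { w | ∃ v : Fin n → R3 F,
      (AdjoinRoot.root ((X : Polynomial F) ^ 3)) ^ 2 • v ∈ C ∧ w = fun i => π (v i) }) :
    T2 = HdualF r T0 :=
  stmt_5_general r n F bar hbar1 hbar2 π hπ0 hπa C hC T0 T2 hT0 hT2
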